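/- arXiv:1312.5881 — 7 statements merged into one kernel-verified Lean document; each statement's English description precedes it below -/
import Mathlib

section
/- For every integer n ≥ 1, exp(1/(240n^3) - 11/(6720n^5)) < e^n · n! / (n^n · √(2πn) · exp(ψ'(n+1/2)/12)), where ψ' is the trigamma function. -/
open Real Filter Topology

noncomputable def trigamma (x : ℝ) : ℝ :=
  iteratedDeriv 2 (fun y => Real.log (Real.Gamma y)) x

/-!
Let `r n = log (stirlingSeq n) - ψ'(n + 1/2) / 12 - (1 / (240 n³) - 11 / (6720 n⁵))`. By
Stirling's formula and `ψ'(x) = ∑ₘ 1 / (x + m)² → 0`, `r n → log √π`. It is strictly decreasing: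
by `ψ'(x + 1) = ψ'(x) - 1 / x²` and
`log (stirlingSeq n) - log (stirlingSeq (n + 1)) = ∑_{k ≥ 1} y^(2k) / (2k + 1)` with
`y = 1 / (2n + 1)`, the step `r n - r (n + 1)` is at least `y⁴/5 + y⁶/7` minus the step of the
rational correction, a rational function of `n` with positive coefficients. Hence `r n > log √π`,
which is the claim after exponentiating.

The series for `ψ'` comes from differentiating Gauss's series
`log Γ(x) = -log x + ∑ₘ (x log ((m + 2) / (m + 1)) - log ((x + m + 1) / (m + 1)))` twice termwise.
-/

open Finset Real.BohrMollerup Stirling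

noncomputable def logGammaTerm (m : ℕ) (x : ℝ) : ℝ :=
  x * (log ((m : ℝ) + 2) - log ((m : ℝ) + 1)) - (log (x + m + 1) - log ((m : ℝ) + 1))

noncomputable def digammaTerm (m : ℕ) (x : ℝ) : ℝ :=
  log ((m : ℝ) + 2) - log ((m : ℝ) + 1) - 1 / (x + m + 1)

lemma sum_range_logGammaTerm (x : ℝ) (N : ℕ) :
    ∑ m ∈ range N, logGammaTerm m x = logGammaSeq x N + log x + x * (log (N + 1) - log N) := by
  induction N with
  | zero => simp [logGammaSeq]
  | succ N ih =>
    rw [sum_range_succ, ih, logGammaTerm, logGammaSeq, logGammaSeq, sum_range_succ _ (N + 1),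
      Nat.factorial_succ, Nat.cast_mul, log_mul (by positivity) (by positivity)]
    push_cast
    ring_nf

lemma tendsto_sum_range_logGammaTerm {x : ℝ} (hx : 0 < x) :
    Tendsto (fun N => ∑ m ∈ range N, logGammaTerm m x) atTop (𝓝 (log (Gamma x) + log x)) := by
  simp_rw [sum_range_logGammaTerm]
  simpa using ((tendsto_log_gamma hx).add_const (log x)).add
    (tendsto_log_nat_add_one_sub_log.const_mul x)

lemma hasDerivAt_logGammaTerm (m : ℕ) {x : ℝ} (hx : 0 < x + m + 1) :
    HasDerivAt (logGammaTerm m) (digammaTerm m x) x := by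
  have hlog : HasDerivAt (fun y : ℝ => log (y + m + 1)) (1 / (x + m + 1)) x := by
    simpa using (((hasDerivAt_id' x).add_const (m : ℝ)).add_const 1).log hx.ne'
  have := ((hasDerivAt_id' x).mul_const (log ((m : ℝ) + 2) - log ((m : ℝ) + 1))).sub
    (hlog.sub_const (log ((m : ℝ) + 1)))
  exact this.congr_deriv (by simp [digammaTerm])

lemma hasDerivAt_digammaTerm (m : ℕ) {x : ℝ} (hx : 0 < x + m + 1) :
    HasDerivAt (digammaTerm m) (1 / (x + m + 1) ^ 2) x := by
  have := ((((hasDerivAt_id' x).add_const (m : ℝ)).add_const 1).inv hx.ne').const_sub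
    (log ((m : ℝ) + 2) - log ((m : ℝ) + 1))
  rw [show digammaTerm m = fun y => log ((m : ℝ) + 2) - log ((m : ℝ) + 1) - (y + (m : ℝ) + 1)⁻¹ from
    funext fun y => by simp [digammaTerm]]
  exact this.congr_deriv (by simp [neg_div])

lemma abs_digammaTerm_le (m : ℕ) {x b : ℝ} (hx : 0 ≤ x) (hxb : x ≤ b) :
    |digammaTerm m x| ≤ (b + 1) / ((m : ℝ) + 1) ^ 2 := by
  set k : ℝ := (m : ℝ) + 1
  have hk : 1 ≤ k := by simp [k]
  have hlog : log ((m : ℝ) + 2) - log ((m : ℝ) + 1) = log (1 + 1 / k) := by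
    rw [← log_div (by positivity) (by positivity)]
    congr 1
    field_simp
    ring
  have hupper : log (1 + 1 / k) ≤ 1 / k := by
    linarith [log_le_sub_one_of_pos (show 0 < 1 + 1 / k by positivity)]
  have hlower : 1 / (k + 1) ≤ log (1 + 1 / k) := by
    have := one_sub_inv_le_log_of_pos (show 0 < 1 + 1 / k by positivity)
    convert this using 1
    field_simp
    ring
  rw [digammaTerm, hlog, show x + m + 1 = x + k by ring, abs_le]
  have hxk : 0 < x + k := by linarith
  constructor
  · calc -((b + 1) / k ^ 2) ≤ 1 / (k + 1) - 1 / k := by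
          rw [div_sub_div _ _ (by positivity) (by positivity), neg_le, ← neg_div,
            div_le_div_iff₀ (by positivity) (by positivity)]
          nlinarith
      _ ≤ log (1 + 1 / k) - 1 / (x + k) := by
          gcongr
          linarith
  · calc log (1 + 1 / k) - 1 / (x + k) ≤ 1 / k - 1 / (x + k) := by gcongr
      _ = x / (k * (x + k)) := by field_simp; ring
      _ ≤ (b + 1) / k ^ 2 := by
          rw [div_le_div_iff₀ (by positivity) (by positivity)]
          nlinarith [mul_nonneg (mul_nonneg (by positivity : (0 : ℝ) ≤ k) hx)
            (by linarith : (0 : ℝ) ≤ b + 1), mul_nonneg (sq_nonneg k) (by linarith : 0 ≤ b + 1 - x)]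

lemma summable_one_div_nat_add_one_sq : Summable fun m : ℕ => 1 / ((m : ℝ) + 1) ^ 2 := by
  simpa using (summable_nat_add_iff 1).mpr (Real.summable_one_div_nat_pow.mpr one_lt_two)

lemma summable_logGammaTerm {x : ℝ} (hx : 0 < x) : Summable fun m => logGammaTerm m x := by
  -- every term vanishes at `1`, and the derivative bound on `Ioo 0 (x + 1)` carries this to `x`
  refine summable_of_summable_hasDerivAt_of_isPreconnected
    (summable_one_div_nat_add_one_sq.mul_left (x + 1 + 1)) isOpen_Ioo isPreconnected_Ioo
    (fun m y hy => hasDerivAt_logGammaTerm m (by linarith [hy.1]))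
    (fun m y hy => ?_) (y₀ := 1) ⟨one_pos, by linarith⟩ ?_ ⟨hx, lt_add_one x⟩
  · rw [Real.norm_eq_abs, mul_one_div]
    exact abs_digammaTerm_le m hy.1.le hy.2.le
  · simp only [logGammaTerm]
    ring_nf
    exact summable_zero

lemma hasSum_logGammaTerm {x : ℝ} (hx : 0 < x) :
    HasSum (fun m => logGammaTerm m x) (log (Gamma x) + log x) := by
  have h := (summable_logGammaTerm hx).hasSum
  rwa [tendsto_nhds_unique h.tendsto_sum_nat (tendsto_sum_range_logGammaTerm hx)] at h

lemma hasDerivAt_log_Gamma {x : ℝ} (hx : 0 < x) :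
    HasDerivAt (fun y => log (Gamma y)) (∑' m, digammaTerm m x - x⁻¹) x := by
  have hseries : HasDerivAt (fun y => ∑' m, logGammaTerm m y) (∑' m, digammaTerm m x) x :=
    hasDerivAt_tsum_of_isPreconnected
      (summable_one_div_nat_add_one_sq.mul_left (x + 1 + 1)) isOpen_Ioo isPreconnected_Ioo
      (fun m y hy => hasDerivAt_logGammaTerm m (by linarith [hy.1]))
      (fun m y hy => by
        rw [Real.norm_eq_abs, mul_one_div]
        exact abs_digammaTerm_le m hy.1.le hy.2.le)
      ⟨hx, lt_add_one x⟩ (summable_logGammaTerm hx) ⟨hx, lt_add_one x⟩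
  have heq : (fun y => ∑' m, logGammaTerm m y - log y) =ᶠ[𝓝 x] fun y => log (Gamma y) := by
    filter_upwards [Ioi_mem_nhds hx] with y hy
    rw [(hasSum_logGammaTerm hy).tsum_eq, add_sub_cancel_right]
  exact (hseries.sub (hasDerivAt_log hx.ne')).congr_of_eventuallyEq heq.symm

lemma hasDerivAt_tsum_digammaTerm {x : ℝ} (hx : 0 < x) :
    HasDerivAt (fun y => ∑' m, digammaTerm m y) (∑' m : ℕ, 1 / (x + m + 1) ^ 2) x := by
  refine hasDerivAt_tsum_of_isPreconnected summable_one_div_nat_add_one_sq isOpen_Ioi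
    isPreconnected_Ioi (fun m y hy => hasDerivAt_digammaTerm m (by linarith [hy.out]))
    (fun m y hy => ?_) hx ?_ hx
  · have hy : 0 < y := hy
    rw [norm_div, norm_one, Real.norm_eq_abs, abs_of_pos (by positivity)]
    gcongr
    linarith
  · refine .of_norm_bounded (summable_one_div_nat_add_one_sq.mul_left (x + 1)) fun m => ?_
    rw [Real.norm_eq_abs, mul_one_div]
    exact abs_digammaTerm_le m hx.le le_rfl

lemma trigamma_eq_tsum {x : ℝ} (hx : 0 < x) :
    trigamma x = ∑' m : ℕ, 1 / (x + m + 1) ^ 2 + 1 / x ^ 2 := by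
  have hderiv : deriv (fun y => log (Gamma y)) =ᶠ[𝓝 x]
      fun y => ∑' m, digammaTerm m y - y⁻¹ := by
    filter_upwards [Ioi_mem_nhds hx] with y hy
    exact (hasDerivAt_log_Gamma hy).deriv
  have h : HasDerivAt (fun y => ∑' m, digammaTerm m y - y⁻¹) _ x :=
    (hasDerivAt_tsum_digammaTerm hx).sub (hasDerivAt_inv hx.ne')
  rw [trigamma, iteratedDeriv_succ, iteratedDeriv_one, hderiv.deriv_eq, h.deriv, sub_neg_eq_add,
    one_div]

lemma hasSum_trigamma {x : ℝ} (hx : 0 < x) :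
    HasSum (fun m : ℕ => 1 / (x + m) ^ 2) (trigamma x) := by
  have hsum : Summable fun m : ℕ => 1 / (x + m + 1) ^ 2 :=
    summable_one_div_nat_add_one_sq.of_nonneg_of_le (fun m => by positivity) fun m => by
      gcongr
      linarith
  rw [← hasSum_nat_add_iff' 1, trigamma_eq_tsum hx, sum_range_one, Nat.cast_zero, add_zero,
    add_sub_cancel_right]
  simpa only [Nat.cast_add, Nat.cast_one, add_assoc] using hsum.hasSum

lemma trigamma_add_one {x : ℝ} (hx : 0 < x) : trigamma (x + 1) = trigamma x - 1 / x ^ 2 := by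
  refine (hasSum_trigamma (by linarith : 0 < x + 1)).unique ?_
  have := (hasSum_nat_add_iff' 1).mpr (hasSum_trigamma hx)
  rw [sum_range_one, Nat.cast_zero, add_zero] at this
  simpa only [Nat.cast_add, Nat.cast_one, add_assoc, add_comm (1 : ℝ)] using this

lemma tendsto_trigamma_nat_add {x : ℝ} (hx : 0 < x) :
    Tendsto (fun n : ℕ => trigamma (n + x)) atTop (𝓝 0) := by
  have h (n : ℕ) : trigamma (n + x) = ∑' k : ℕ, 1 / (x + ↑(k + n)) ^ 2 := by
    rw [← (hasSum_trigamma (by positivity : 0 < n + x)).tsum_eq]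
    push_cast
    ring_nf
  simpa only [h] using tendsto_sum_nat_add fun k : ℕ => 1 / (x + k) ^ 2

lemma le_log_stirlingSeq_sub_log_stirlingSeq_succ (m : ℕ) :
    (1 / (2 * ((m : ℝ) + 1) + 1)) ^ 2 / 3 + (1 / (2 * ((m : ℝ) + 1) + 1)) ^ 4 / 5 +
      (1 / (2 * ((m : ℝ) + 1) + 1)) ^ 6 / 7 ≤
      log (stirlingSeq (m + 1)) - log (stirlingSeq (m + 2)) := by
  have h := sum_le_hasSum (range 3) (fun k _ => by positivity)
    (log_stirlingSeq_sdiff_hasSum m)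
  norm_num [sum_range_succ] at h
  have hy (a : ℝ) : (1 / a) ^ 2 / 3 + (1 / a) ^ 4 / 5 + (1 / a) ^ 6 / 7 =
      1 / 3 * (a ^ 2)⁻¹ + 1 / 5 * ((a ^ 2) ^ 2)⁻¹ + 1 / 7 * ((a ^ 2) ^ 3)⁻¹ := by ring
  rwa [hy]

noncomputable def stirlingCorrection (t : ℝ) : ℝ := 1 / (240 * t ^ 3) - 11 / (6720 * t ^ 5)

lemma stirlingCorrection_sub_add_lt {t : ℝ} (ht : 0 < t) :
    stirlingCorrection t - stirlingCorrection (t + 1) + 1 / (t + 1 / 2) ^ 2 / 12 <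
      (1 / (2 * t + 1)) ^ 2 / 3 + (1 / (2 * t + 1)) ^ 4 / 5 + (1 / (2 * t + 1)) ^ 6 / 7 := by
  rw [← sub_pos]
  have key : (1 / (2 * t + 1)) ^ 2 / 3 + (1 / (2 * t + 1)) ^ 4 / 5 + (1 / (2 * t + 1)) ^ 6 / 7 -
      (stirlingCorrection t - stirlingCorrection (t + 1) + 1 / (t + 1 / 2) ^ 2 / 12) =
      (3808 * t ^ 8 + 15232 * t ^ 7 + 26432 * t ^ 6 + 25984 * t ^ 5 + 15775 * t ^ 4 +
        6014 * t ^ 3 + 1402 * t ^ 2 + 187 * t + 11) /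
      (6720 * (t ^ 5 * (t + 1) ^ 5 * (2 * t + 1) ^ 6)) := by
    unfold stirlingCorrection
    field_simp
    ring
  rw [key]
  positivity

lemma tendsto_stirlingCorrection : Tendsto stirlingCorrection atTop (𝓝 0) := by
  have h (c : ℝ) (k : ℕ) (hc : 0 < c) (hk : k ≠ 0) :
      Tendsto (fun t : ℝ => 1 / (c * t ^ k)) atTop (𝓝 0) :=
    tendsto_const_nhds.div_atTop ((tendsto_pow_atTop hk).const_mul_atTop hc)
  have := (h 240 3 (by norm_num) (by norm_num)).sub
    ((h 6720 5 (by norm_num) (by norm_num)).const_mul 11)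
  rw [mul_zero, sub_zero] at this
  exact this.congr fun t => by rw [stirlingCorrection]; ring

noncomputable def stirlingRemainder (n : ℕ) : ℝ :=
  log (stirlingSeq n) - trigamma (n + 1 / 2) / 12 - stirlingCorrection n

lemma stirlingRemainder_succ_lt (m : ℕ) :
    stirlingRemainder (m + 1 + 1) < stirlingRemainder (m + 1) := by
  have htrigamma := trigamma_add_one (by positivity : (0 : ℝ) < m + 1 + 1 / 2)
  have hcorr := stirlingCorrection_sub_add_lt (by positivity : (0 : ℝ) < m + 1)
  have hstirling := le_log_stirlingSeq_sub_log_stirlingSeq_succ m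
  simp only [stirlingRemainder, Nat.cast_add, Nat.cast_one]
  rw [show (m : ℝ) + 1 + 1 + 1 / 2 = m + 1 + 1 / 2 + 1 by ring, htrigamma]
  linarith

lemma tendsto_stirlingRemainder : Tendsto stirlingRemainder atTop (𝓝 (log √π)) := by
  have h := ((tendsto_stirlingSeq_sqrt_pi.log (by positivity)).sub
    ((tendsto_trigamma_nat_add (by norm_num : (0 : ℝ) < 1 / 2)).div_const 12)).sub
    (tendsto_stirlingCorrection.comp tendsto_natCast_atTop_atTop)
  rwa [zero_div, sub_zero, sub_zero] at h

lemma log_sqrt_pi_lt_stirlingRemainder {n : ℕ} (hn : n ≠ 0) : log √π < stirlingRemainder n := by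
  obtain ⟨m, rfl⟩ := Nat.exists_eq_succ_of_ne_zero hn
  have hanti : StrictAnti fun k => stirlingRemainder (k + 1) :=
    strictAnti_nat_of_succ_lt stirlingRemainder_succ_lt
  calc log √π ≤ stirlingRemainder (m + 1 + 1) :=
        hanti.antitone.le_of_tendsto (tendsto_stirlingRemainder.comp (tendsto_add_atTop_nat 1)) _
    _ < stirlingRemainder (m + 1) := hanti (lt_add_one m)

lemma stirlingSeq_div_sqrt_pi (n : ℕ) :
    stirlingSeq n / √π = exp n * n.factorial / (n ^ n * √(2 * π * n)) := by
  rw [stirlingSeq, div_pow, ← exp_one_pow, show 2 * π * n = 2 * n * π by ring,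
    Real.sqrt_mul' _ pi_pos.le]
  field_simp

theorem stmt1 (n : ℕ) (hn : 1 ≤ n) :
    Real.exp (1 / (240 * (n : ℝ) ^ 3) - 11 / (6720 * (n : ℝ) ^ 5)) <
    Real.exp n * (n.factorial : ℝ) /
      ((n : ℝ) ^ n * Real.sqrt (2 * Real.pi * n) * Real.exp (trigamma (n + 1/2) / 12)) := by
  have hn0 : n ≠ 0 := Nat.one_le_iff_ne_zero.mp hn
  have hpos : 0 < stirlingSeq n := by
    obtain ⟨m, rfl⟩ := Nat.exists_eq_succ_of_ne_zero hn0
    exact stirlingSeq'_pos m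
  have key := log_sqrt_pi_lt_stirlingRemainder hn0
  rw [stirlingRemainder, stirlingCorrection] at key
  calc _ < exp (log (stirlingSeq n) - log √π - trigamma (n + 1 / 2) / 12) :=
        exp_lt_exp.mpr (by linarith)
    _ = _ := by
        rw [exp_sub, exp_sub, exp_log hpos, exp_log (by positivity), stirlingSeq_div_sqrt_pi,
          div_div]
end

section
/- The function u(x) = 1 + ln(x+1) - (x + 3/2)·ln(x+1) + (x + 1/2)·ln x + 1/(12(x+1/2)^2) - 1/(240(x+1)^3) + 1/(240x^3) satisfies u''(x) = (1 + 13x + 74x^2 + 232x^3 + 391x^4 + 330x^5 + 110x^6)/(20·x^5·(x+1)^5·(2x+1)^4) for all x > 0, and hence u is strictly convex on (0,∞). -/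
/-!
Differentiating termwise twice and clearing denominators, `u''` becomes a polynomial with
positive coefficients over a positive denominator, so `u` is strictly convex on `(0, ∞)`.
-/

open Real Set Filter Topology

theorem hasDerivAt_one_div_mul_pow (c : ℝ) (n : ℕ) {x : ℝ} (hx : x ≠ 0) :
    HasDerivAt (fun y => 1 / (c * y ^ n)) (-(n / (c * x ^ (n + 1)))) x := by
  have h := (hasDerivAt_zpow (-n) x (Or.inl hx)).const_mul c⁻¹
  have hfun : (fun y : ℝ => 1 / (c * y ^ n)) = fun y => c⁻¹ * y ^ (-(n : ℤ)) := by
    funext y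
    rw [zpow_neg, zpow_natCast, one_div, mul_inv]
  rw [hfun]
  refine h.congr_deriv ?_
  rw [show (-(n : ℤ) - 1) = -((n + 1 : ℕ) : ℤ) by push_cast; ring, zpow_neg, zpow_natCast]
  push_cast
  ring

namespace StirlingRemainder

noncomputable def u (x : ℝ) : ℝ :=
  1 + log (x + 1) - (x + 3/2) * log (x + 1) + (x + 1/2) * log x
    + 1 / (12 * (x + 1/2) ^ 2) - 1 / (240 * (x + 1) ^ 3) + 1 / (240 * x ^ 3)

/-- The logarithmic part of `u` contributes
`1/(x+1) - (x+3/2)/(x+1) + (x+1/2)/x = 1/(2x) + 1/(2(x+1))` besides `log x - log (x+1)`. -/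
noncomputable def u' (x : ℝ) : ℝ :=
  log x - log (x + 1) + 1 / (2 * x) + 1 / (2 * (x + 1))
    - 1 / (6 * (x + 1/2) ^ 3) + 1 / (80 * (x + 1) ^ 4) - 1 / (80 * x ^ 4)

theorem hasDerivAt_u {x : ℝ} (hx : 0 < x) : HasDerivAt u (u' x) x := by
  have hlog : HasDerivAt (fun y => log (y + 1)) (x + 1)⁻¹ x :=
    (hasDerivAt_log (by positivity)).comp_add_const x 1
  have h := ((((((hasDerivAt_const x (1 : ℝ)).add hlog).sub
    (((hasDerivAt_id' x).add_const (3/2)).mul hlog)).add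
    (((hasDerivAt_id' x).add_const (1/2)).mul (hasDerivAt_log hx.ne'))).add
    ((hasDerivAt_one_div_mul_pow 12 2 (by positivity : x + 1/2 ≠ 0)).comp_add_const x (1/2))).sub
    ((hasDerivAt_one_div_mul_pow 240 3 (by positivity : x + 1 ≠ 0)).comp_add_const x 1)).add
    (hasDerivAt_one_div_mul_pow 240 3 hx.ne')
  refine h.congr_deriv ?_
  simp only [u']
  field_simp
  ring

theorem hasDerivAt_u' {x : ℝ} (hx : 0 < x) :
    HasDerivAt u' ((1 + 13*x + 74*x^2 + 232*x^3 + 391*x^4 + 330*x^5 + 110*x^6) /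
      (20 * x^5 * (x+1)^5 * (2*x+1)^4)) x := by
  have h := ((((((hasDerivAt_log hx.ne').sub
    ((hasDerivAt_log (by positivity : x + 1 ≠ 0)).comp_add_const x 1)).add
    (by simpa only [pow_one] using hasDerivAt_one_div_mul_pow 2 1 hx.ne')).add
    (by simpa only [pow_one] using
      (hasDerivAt_one_div_mul_pow 2 1 (by positivity : x + 1 ≠ 0)).comp_add_const x 1)).sub
    ((hasDerivAt_one_div_mul_pow 6 3 (by positivity : x + 1/2 ≠ 0)).comp_add_const x (1/2))).add
    ((hasDerivAt_one_div_mul_pow 80 4 (by positivity : x + 1 ≠ 0)).comp_add_const x 1)).sub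
    (hasDerivAt_one_div_mul_pow 80 4 hx.ne')
  refine h.congr_deriv ?_
  field_simp
  ring

theorem deriv_deriv_u {x : ℝ} (hx : 0 < x) :
    deriv (deriv u) x = (1 + 13*x + 74*x^2 + 232*x^3 + 391*x^4 + 330*x^5 + 110*x^6) /
      (20 * x^5 * (x+1)^5 * (2*x+1)^4) := by
  have hderiv : deriv u =ᶠ[𝓝 x] u' :=
    eventually_of_mem (Ioi_mem_nhds hx) fun y hy => (hasDerivAt_u hy).deriv
  rw [hderiv.deriv_eq, (hasDerivAt_u' hx).deriv]

theorem strictConvexOn_u : StrictConvexOn ℝ (Ioi 0) u := by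
  refine strictConvexOn_of_deriv2_pos (convex_Ioi 0)
    (fun x hx => (hasDerivAt_u hx).continuousAt.continuousWithinAt) fun x hx => ?_
  rw [interior_Ioi, mem_Ioi] at hx
  rw [Function.iterate_succ_apply, Function.iterate_one, deriv_deriv_u hx]
  positivity

end StirlingRemainder

theorem stmt5 :
    (∀ x : ℝ, 0 < x →
      deriv (deriv (fun x : ℝ => 1 + Real.log (x + 1) - (x + 3/2) * Real.log (x + 1) + (x + 1/2) * Real.log x
    + 1 / (12 * (x + 1/2) ^ 2) - 1 / (240 * (x + 1) ^ 3) + 1 / (240 * x ^ 3))) x =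
        (1 + 13*x + 74*x^2 + 232*x^3 + 391*x^4 + 330*x^5 + 110*x^6) /
          (20 * x^5 * (x+1)^5 * (2*x+1)^4)) ∧
    StrictConvexOn ℝ (Ioi (0:ℝ)) (fun x : ℝ => 1 + Real.log (x + 1) - (x + 3/2) * Real.log (x + 1) + (x + 1/2) * Real.log x
    + 1 / (12 * (x + 1/2) ^ 2) - 1 / (240 * (x + 1) ^ 3) + 1 / (240 * x ^ 3)) :=
  ⟨fun _ hx => StirlingRemainder.deriv_deriv_u hx, StirlingRemainder.strictConvexOn_u⟩
end

section
/- The function u(x) = 1 + ln(x+1) - (x + 3/2)·ln(x+1) + (x + 1/2)·ln x + 1/(12(x+1/2)^2) - 1/(240(x+1)^3) + 1/(240x^3) is positive for all x > 0. -/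
/-!
With `t = 1 / (2x + 1)`, the artanh series gives
`(x + 1/2) log (1 + 1/x) = ∑ₖ t^(2k) / (2k + 1)`. Bounding the denominators from `k = 2` on
by `5` turns the tail into a geometric series, so
`(x + 1/2) log (1 + 1/x) < 1 + t²/3 + t⁴/(5(1 - t²))
  = 1 + 1/(12(x + 1/2)²) + 1/(80(x + 1/2)² x(x + 1))`,
and the last term is at most `1/(240x³) - 1/(240(x + 1)³)`.
-/

open Real Finset

theorem log_one_add_sub_log_one_sub_lt {t : ℝ} (h0 : 0 < t) (h1 : t < 1) :
    log (1 + t) - log (1 - t) < 2 * (t + t ^ 3 / 3 + t ^ 5 / (5 * (1 - t ^ 2))) := by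
  set f : ℕ → ℝ := fun k => 2 * (1 / (2 * k + 1)) * t ^ (2 * k + 1)
  have htail : HasSum (fun k => f (k + 2)) (log (1 + t) - log (1 - t) - ∑ i ∈ range 2, f i) :=
    (hasSum_nat_add_iff' 2).2 (hasSum_log_sub_log_of_abs_lt_one (abs_lt.2 ⟨by linarith, h1⟩))
  have hgeom : HasSum (fun k : ℕ => 2 * t ^ 5 / 5 * (t ^ 2) ^ k) (2 * t ^ 5 / 5 * (1 - t ^ 2)⁻¹) :=
    (hasSum_geometric_of_lt_one (sq_nonneg t) (by nlinarith)).mul_left _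
  have hf (k : ℕ) : f (k + 2) = 2 * t ^ 5 * (t ^ 2) ^ k / (2 * k + 5) := by
    simp only [f]
    rw [show 2 * (k + 2) + 1 = 5 + 2 * k by ring, pow_add, pow_mul]
    push_cast
    field_simp
    ring
  have hle (k : ℕ) : f (k + 2) ≤ 2 * t ^ 5 / 5 * (t ^ 2) ^ k := by
    rw [hf, div_mul_eq_mul_div]
    exact div_le_div_of_nonneg_left (by positivity) (by norm_num) (by linarith [k.cast_nonneg (α := ℝ)])
  have hlt : f (1 + 2) < 2 * t ^ 5 / 5 * (t ^ 2) ^ 1 := by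
    rw [hf, div_mul_eq_mul_div]
    exact div_lt_div_of_pos_left (by positivity) (by norm_num) (by norm_num)
  have hsum := hasSum_lt hle hlt htail hgeom
  norm_num [sum_range_succ, f] at hsum
  rw [div_eq_mul_inv _ (5 * _), mul_inv, ← mul_assoc]
  linarith

theorem mul_log_one_add_inv_lt {x : ℝ} (hx : 0 < x) :
    (x + 1 / 2) * log (1 + x⁻¹)
      < 1 + 1 / (12 * (x + 1 / 2) ^ 2) + 1 / (240 * x ^ 3) - 1 / (240 * (x + 1) ^ 3) := by
  set t := 1 / (2 * x + 1) with ht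
  have ht0 : 0 < t := by positivity
  have ht1 : t < 1 := by rw [ht, div_lt_one (by positivity)]; linarith
  have hlog : log (1 + x⁻¹) = log (1 + t) - log (1 - t) :=
    (hasSum_log_one_add_inv hx).unique (hasSum_log_sub_log_of_abs_lt_one (abs_lt.2 ⟨by linarith, ht1⟩))
  have hseries : (x + 1 / 2) * (2 * (t + t ^ 3 / 3 + t ^ 5 / (5 * (1 - t ^ 2))))
      = 1 + 1 / (12 * (x + 1 / 2) ^ 2) + 1 / (80 * (x + 1 / 2) ^ 2 * (x * (x + 1))) := by
    have h1t : 1 - t ^ 2 = 4 * (x * (x + 1)) / (2 * x + 1) ^ 2 := by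
      rw [ht]; field_simp; ring
    rw [h1t, ht]
    field_simp
    ring
  have hcubes : 1 / (80 * (x + 1 / 2) ^ 2 * (x * (x + 1)))
      ≤ 1 / (240 * x ^ 3) - 1 / (240 * (x + 1) ^ 3) := by
    -- after clearing denominators: `3x²(x + 1)² ≤ (x + 1/2)²(3x² + 3x + 1)`
    rw [div_sub_div _ _ (by positivity) (by positivity), div_le_div_iff₀ (by positivity) (by positivity)]
    nlinarith [mul_pos hx (by linarith : 0 < x + 1), pow_pos hx 3]
  calc (x + 1 / 2) * log (1 + x⁻¹)
      < (x + 1 / 2) * (2 * (t + t ^ 3 / 3 + t ^ 5 / (5 * (1 - t ^ 2)))) := by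
        rw [hlog]; exact mul_lt_mul_of_pos_left (log_one_add_sub_log_one_sub_lt ht0 ht1) (by linarith)
    _ ≤ _ := by rw [hseries]; linarith

theorem stmt6 (x : ℝ) (hx : 0 < x) :
    0 < (fun x : ℝ => 1 + Real.log (x + 1) - (x + 3/2) * Real.log (x + 1) + (x + 1/2) * Real.log x
    + 1 / (12 * (x + 1/2) ^ 2) - 1 / (240 * (x + 1) ^ 3) + 1 / (240 * x ^ 3)) x := by
  have hlog : log (1 + x⁻¹) = log (x + 1) - log x := by
    rw [← log_div (by positivity) hx.ne', add_div, div_self hx.ne', one_div, add_comm]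
  have hbound := mul_log_one_add_inv_lt hx
  rw [hlog] at hbound
  beta_reduce
  linarith
end

section
/- The function v(x) = 1 + ln(x+1) - (x + 3/2)·ln(x+1) + (x + 1/2)·ln x + 1/(12(x+1/2)^2) - 1/(240(x+1)^3) + 1/(240x^3) + 11/(6720(x+1)^5) - 11/(6720x^5) is negative for all x > 0. -/
/-!
With `t = 1 / (2x + 1)` one has `log (x + 1) - log x = log ((1 + t) / (1 - t)) = 2 artanh t`,
whose Taylor series has positive terms. Replacing the logarithms in `v` by the first four terms
`2 (t + t³/3 + t⁵/5 + t⁷/7)` therefore only increases `v`, and the resulting rational function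
of `x` equals `-P(x) / (6720 x⁵ (x + 1)⁵ (2x + 1)⁶)` with `P` a polynomial with positive
coefficients.
-/

open Real Finset

theorem sum_range_le_log_one_add_inv {a : ℝ} (ha : 0 < a) (n : ℕ) :
    ∑ k ∈ range n, 2 * (1 / (2 * k + 1)) * (1 / (2 * a + 1)) ^ (2 * k + 1) ≤ log (1 + a⁻¹) :=
  sum_le_hasSum _ (fun _ _ ↦ by positivity) (hasSum_log_one_add_inv ha)

theorem log_add_one_sub_log {x : ℝ} (hx : 0 < x) : log (x + 1) - log x = log (1 + x⁻¹) := by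
  rw [← log_div (by positivity) hx.ne', add_div, div_self hx.ne', one_div]

theorem one_sub_mul_artanh_partial_sum_add_correction_neg {x : ℝ} (hx : 0 < x) :
    1 - (x + 1/2) * ∑ k ∈ range 4, 2 * (1 / (2 * (k : ℝ) + 1)) * (1 / (2 * x + 1)) ^ (2 * k + 1)
      + 1 / (12 * (x + 1/2) ^ 2) - 1 / (240 * (x + 1) ^ 3) + 1 / (240 * x ^ 3)
      + 11 / (6720 * (x + 1) ^ 5) - 11 / (6720 * x ^ 5) < 0 := by
  have hP : 0 < 11 + 187 * x + 1402 * x ^ 2 + 6014 * x ^ 3 + 15775 * x ^ 4 + 25984 * x ^ 5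
      + 26432 * x ^ 6 + 15232 * x ^ 7 + 3808 * x ^ 8 := by positivity
  have hrational :
      1 - (x + 1/2) * ∑ k ∈ range 4, 2 * (1 / (2 * (k : ℝ) + 1)) * (1 / (2 * x + 1)) ^ (2 * k + 1)
        + 1 / (12 * (x + 1/2) ^ 2) - 1 / (240 * (x + 1) ^ 3) + 1 / (240 * x ^ 3)
        + 11 / (6720 * (x + 1) ^ 5) - 11 / (6720 * x ^ 5)
      = -((11 + 187 * x + 1402 * x ^ 2 + 6014 * x ^ 3 + 15775 * x ^ 4 + 25984 * x ^ 5
          + 26432 * x ^ 6 + 15232 * x ^ 7 + 3808 * x ^ 8)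
        / (6720 * x ^ 5 * (x + 1) ^ 5 * (2 * x + 1) ^ 6)) := by
    simp only [sum_range_succ, sum_range_zero]
    push_cast
    field_simp
    ring
  rw [hrational, neg_lt_zero]
  positivity

theorem stmt7 (x : ℝ) (hx : 0 < x) :
    (fun x : ℝ => 1 + Real.log (x + 1) - (x + 3/2) * Real.log (x + 1) + (x + 1/2) * Real.log x
    + 1 / (12 * (x + 1/2) ^ 2) - 1 / (240 * (x + 1) ^ 3) + 1 / (240 * x ^ 3)
    + 11 / (6720 * (x + 1) ^ 5) - 11 / (6720 * x ^ 5)) x < 0 := by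
  have hseries := sum_range_le_log_one_add_inv hx 4
  rw [← log_add_one_sub_log hx] at hseries
  have hmul := mul_le_mul_of_nonneg_left hseries (by positivity : (0 : ℝ) ≤ x + 1/2)
  have hneg := one_sub_mul_artanh_partial_sum_add_correction_neg hx
  dsimp only
  linarith
end

section
/- The function v(x) = 1 + ln(x+1) - (x + 3/2)·ln(x+1) + (x + 1/2)·ln x + 1/(12(x+1/2)^2) - 1/(240(x+1)^3) + 1/(240x^3) + 11/(6720(x+1)^5) - 11/(6720x^5) satisfies v''(x) = -Q(x)/(1120·x^7·(x+1)^7·(2x+1)^4) for all x > 0, where Q(x) = 55 + 825x + 5499x^2 + 21325x^3 + 52589x^4 + 83867x^5 + 83881x^6 + 47936x^7 + 11984x^8; hence v is strictly concave on (0,∞). -/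
open Real Set

lemma hasDerivAt_div_mul_pow {x : ℝ} (c a : ℝ) (n : ℕ) (hx : x ≠ 0) (ha : a ≠ 0 := by norm_num) :
    HasDerivAt (fun y => c / (a * y ^ n)) (-(n * c) / (a * x ^ (n + 1))) x := by
  refine ((hasDerivAt_const x c).div ((hasDerivAt_pow n x).const_mul a) (by positivity)).congr_deriv ?_
  rcases n with _ | n
  · simp
  · field_simp
    push_cast
    ring

lemma hasDerivAt_div_mul_add_pow {b x : ℝ} (c a : ℝ) (n : ℕ) (hx : x + b ≠ 0)
    (ha : a ≠ 0 := by norm_num) :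
    HasDerivAt (fun y => c / (a * (y + b) ^ n)) (-(n * c) / (a * (x + b) ^ (n + 1))) x :=
  (hasDerivAt_div_mul_pow c a n hx ha).comp_add_const x b

lemma hasDerivAt_log_add_one {x : ℝ} (hx : 0 < x) :
    HasDerivAt (fun y => log (y + 1)) (x + 1)⁻¹ x :=
  (hasDerivAt_log (by positivity)).comp_add_const x 1

noncomputable def v (x : ℝ) : ℝ :=
  1 + log (x + 1) - (x + 3/2) * log (x + 1) + (x + 1/2) * log x
    + 1 / (12 * (x + 1/2) ^ 2) - 1 / (240 * (x + 1) ^ 3) + 1 / (240 * x ^ 3)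
    + 11 / (6720 * (x + 1) ^ 5) - 11 / (6720 * x ^ 5)

/- The logarithmic part of `v` is `1 + (x + 1/2) * (log x - log (x + 1))`, which is where the
first four terms come from. -/
noncomputable def v' (x : ℝ) : ℝ :=
  log x - log (x + 1) + 1 / (2 * x) + 1 / (2 * (x + 1))
    - 1 / (6 * (x + 1/2) ^ 3) + 1 / (80 * (x + 1) ^ 4) - 1 / (80 * x ^ 4)
    - 11 / (1344 * (x + 1) ^ 6) + 11 / (1344 * x ^ 6)

def Q (x : ℝ) : ℝ :=
  55 + 825*x + 5499*x^2 + 21325*x^3 + 52589*x^4 + 83867*x^5 + 83881*x^6 + 47936*x^7 + 11984*x^8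

lemma hasDerivAt_v {x : ℝ} (hx : 0 < x) : HasDerivAt v (v' x) x := by
  have hx0 : x ≠ 0 := hx.ne'
  have hx1 : x + 1 ≠ 0 := by positivity
  have hxh : x + 1/2 ≠ 0 := by positivity
  have hlog1 := hasDerivAt_log_add_one hx
  have H := ((((((((hlog1.const_add 1).sub
    (((hasDerivAt_id x).add_const (3/2)).mul hlog1)).add
    (((hasDerivAt_id x).add_const (1/2)).mul (hasDerivAt_log hx0))).add
    (hasDerivAt_div_mul_add_pow 1 12 2 hxh)).sub
    (hasDerivAt_div_mul_add_pow 1 240 3 hx1)).add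
    (hasDerivAt_div_mul_pow 1 240 3 hx0)).add
    (hasDerivAt_div_mul_add_pow 11 6720 5 hx1)).sub
    (hasDerivAt_div_mul_pow 11 6720 5 hx0))
  refine H.congr_deriv ?_
  simp only [v', id]
  field_simp
  push_cast
  ring

lemma hasDerivAt_v' {x : ℝ} (hx : 0 < x) :
    HasDerivAt v' (-Q x / (1120 * x^7 * (x+1)^7 * (2*x+1)^4)) x := by
  have hx0 : x ≠ 0 := hx.ne'
  have hx1 : x + 1 ≠ 0 := by positivity
  have hxh : x + 1/2 ≠ 0 := by positivity
  have H := (((((((((hasDerivAt_log hx0).sub (hasDerivAt_log_add_one hx)).add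
    (hasDerivAt_div_mul_pow 1 2 1 hx0)).add
    (hasDerivAt_div_mul_add_pow 1 2 1 hx1)).sub
    (hasDerivAt_div_mul_add_pow 1 6 3 hxh)).add
    (hasDerivAt_div_mul_add_pow 1 80 4 hx1)).sub
    (hasDerivAt_div_mul_pow 1 80 4 hx0)).sub
    (hasDerivAt_div_mul_add_pow 11 1344 6 hx1)).add
    (hasDerivAt_div_mul_pow 11 1344 6 hx0))
  simp only [pow_one] at H
  refine H.congr_deriv ?_
  simp only [Q]
  field_simp
  push_cast
  ring

lemma deriv_deriv_v {x : ℝ} (hx : 0 < x) :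
    deriv (deriv v) x = -Q x / (1120 * x^7 * (x+1)^7 * (2*x+1)^4) := by
  have hderiv : deriv v =ᶠ[nhds x] v' := by
    filter_upwards [isOpen_Ioi.mem_nhds hx] with y hy using (hasDerivAt_v hy).deriv
  rw [hderiv.deriv_eq, (hasDerivAt_v' hx).deriv]

lemma strictConcaveOn_v : StrictConcaveOn ℝ (Ioi 0) v := by
  refine strictConcaveOn_of_deriv2_neg' (convex_Ioi 0)
    (fun x hx => (hasDerivAt_v hx).continuousAt.continuousWithinAt) fun x (hx : 0 < x) => ?_
  rw [Function.iterate_succ_apply, Function.iterate_one, deriv_deriv_v hx, neg_div, neg_lt_zero]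
  simp only [Q]
  positivity

theorem stmt8 :
    (∀ x : ℝ, 0 < x →
      deriv (deriv (fun x : ℝ => 1 + Real.log (x + 1) - (x + 3/2) * Real.log (x + 1) + (x + 1/2) * Real.log x
    + 1 / (12 * (x + 1/2) ^ 2) - 1 / (240 * (x + 1) ^ 3) + 1 / (240 * x ^ 3)
    + 11 / (6720 * (x + 1) ^ 5) - 11 / (6720 * x ^ 5))) x =
        -(55 + 825*x + 5499*x^2 + 21325*x^3 + 52589*x^4 + 83867*x^5 + 83881*x^6
            + 47936*x^7 + 11984*x^8) /
          (1120 * x^7 * (x+1)^7 * (2*x+1)^4)) ∧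
    StrictConcaveOn ℝ (Ioi (0:ℝ)) (fun x : ℝ => 1 + Real.log (x + 1) - (x + 3/2) * Real.log (x + 1) + (x + 1/2) * Real.log x
    + 1 / (12 * (x + 1/2) ^ 2) - 1 / (240 * (x + 1) ^ 3) + 1 / (240 * x ^ 3)
    + 11 / (6720 * (x + 1) ^ 5) - 11 / (6720 * x ^ 5)) :=
  ⟨fun _ hx => deriv_deriv_v hx, strictConcaveOn_v⟩
end

section
/- If a sequence (ω_n) of reals converges to 0 and lim_{n→∞} n^k·(ω_n − ω_{n+1}) = ℓ for some real ℓ and real k > 1, then lim_{n→∞} n^{k-1}·ω_n = ℓ/(k−1). -/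
/-!
Stolz–Cesàro in the `0/0` form, applied to `ω n / n ^ (1 - k)`: the quotient of consecutive
differences is `n ^ k (ω n - ω (n + 1)) / n ^ k (n ^ (1 - k) - (n + 1) ^ (1 - k))`, whose
denominator tends to `k - 1` because `t ↦ (1 + t) ^ (1 - k)` has derivative `1 - k` at `0`.
Stolz–Cesàro itself is a comparison argument: if the quotient is eventually below `c`, then
`ω n - c n ^ (1 - k)` is eventually increasing and tends to `0`, hence is eventually `≤ 0`.
-/

open Filter Topology

lemma eventually_le_of_tendsto_of_eventually_le_succ {α : Type*} [TopologicalSpace α]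
    [Preorder α] [OrderClosedTopology α] {v : ℕ → α} {a : α}
    (hv : Tendsto v atTop (𝓝 a)) (hmono : ∀ᶠ n in atTop, v n ≤ v (n + 1)) :
    ∀ᶠ n in atTop, v n ≤ a := by
  obtain ⟨N, hN⟩ := eventually_atTop.mp hmono
  have hshift : Monotone fun m => v (m + N) :=
    monotone_nat_of_le_succ fun m => by simpa [Nat.add_right_comm] using hN (m + N) (by omega)
  have hle := hshift.ge_of_tendsto (hv.comp (tendsto_add_atTop_nat N))
  filter_upwards [eventually_ge_atTop N] with n hn
  simpa [Nat.sub_add_cancel hn] using hle (n - N)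

section StolzCesaro

variable {a b : ℕ → ℝ} {L : ℝ}

lemma eventually_le_mul_of_tendsto_sub_div_sub (ha : Tendsto a atTop (𝓝 0))
    (hb : Tendsto b atTop (𝓝 0)) (hb_anti : ∀ᶠ n in atTop, b (n + 1) < b n)
    (h : Tendsto (fun n => (a n - a (n + 1)) / (b n - b (n + 1))) atTop (𝓝 L))
    {c : ℝ} (hc : L < c) :
    ∀ᶠ n in atTop, a n ≤ c * b n := by
  have hstep : ∀ᶠ n in atTop, a n - c * b n ≤ a (n + 1) - c * b (n + 1) := by
    filter_upwards [h.eventually_lt_const hc, hb_anti] with n hn hbn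
    have := (div_lt_iff₀ (sub_pos.2 hbn)).1 hn
    linarith
  have hlim : Tendsto (fun n => a n - c * b n) atTop (𝓝 0) := by
    simpa using ha.sub (hb.const_mul c)
  filter_upwards [eventually_le_of_tendsto_of_eventually_le_succ hlim hstep] with n hn
  linarith

/-- **Stolz–Cesàro theorem**, `0/0` form. -/
theorem tendsto_div_of_tendsto_sub_div_sub (ha : Tendsto a atTop (𝓝 0))
    (hb : Tendsto b atTop (𝓝 0)) (hb_anti : ∀ᶠ n in atTop, b (n + 1) < b n)
    (h : Tendsto (fun n => (a n - a (n + 1)) / (b n - b (n + 1))) atTop (𝓝 L)) :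
    Tendsto (fun n => a n / b n) atTop (𝓝 L) := by
  have hb_pos : ∀ᶠ n in atTop, 0 < b n := by
    have hnonneg : ∀ᶠ n in atTop, -b n ≤ 0 :=
      eventually_le_of_tendsto_of_eventually_le_succ (by simpa using hb.neg)
        (hb_anti.mono fun n hn => neg_le_neg hn.le)
    filter_upwards [hb_anti, tendsto_add_atTop_nat 1 |>.eventually hnonneg] with n hn hn'
    linarith
  have hneg : Tendsto (fun n => (-a n - -a (n + 1)) / (b n - b (n + 1))) atTop (𝓝 (-L)) := by
    simpa only [neg_sub_neg, neg_sub, ← neg_div, neg_sub'] using h.neg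
  have hupper {c : ℝ} (hc : L < c) : ∀ᶠ n in atTop, a n ≤ c * b n :=
    eventually_le_mul_of_tendsto_sub_div_sub ha hb hb_anti h hc
  have hlower {c : ℝ} (hc : c < L) : ∀ᶠ n in atTop, -a n ≤ -c * b n :=
    eventually_le_mul_of_tendsto_sub_div_sub (by simpa using ha.neg) hb hb_anti hneg
      (neg_lt_neg hc)
  rw [tendsto_order]
  constructor
  · intro c hc
    obtain ⟨c', hcc', hc'L⟩ := exists_between hc
    filter_upwards [hlower hc'L, hb_pos] with n hn hbn
    rw [lt_div_iff₀ hbn]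
    nlinarith
  · intro c hc
    obtain ⟨c', hLc', hc'c⟩ := exists_between hc
    filter_upwards [hupper hLc', hb_pos] with n hn hbn
    rw [div_lt_iff₀ hbn]
    nlinarith

end StolzCesaro

lemma tendsto_nat_mul_one_add_inv_rpow_sub_one (p : ℝ) :
    Tendsto (fun n : ℕ => (n : ℝ) * ((1 + (n : ℝ)⁻¹) ^ p - 1)) atTop (𝓝 p) := by
  have hderiv : HasDerivAt (fun t : ℝ => (1 + t) ^ p) p 0 := by
    simpa using ((hasDerivAt_id (0 : ℝ)).const_add 1).rpow_const (p := p) (Or.inl (by simp))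
  have hinv : Tendsto (fun n : ℕ => (n : ℝ)⁻¹) atTop (𝓝[≠] 0) :=
    tendsto_nhdsWithin_of_tendsto_nhds_of_eventually_within _ tendsto_inv_atTop_nhds_zero_nat
      (by filter_upwards [eventually_ne_atTop 0] with n hn; simpa using hn)
  refine ((hasDerivAt_iff_tendsto_slope.1 hderiv).comp hinv).congr fun n => ?_
  simp [slope_def_module]

lemma tendsto_rpow_mul_rpow_neg_sub_rpow_neg (p : ℝ) :
    Tendsto (fun n : ℕ => (n : ℝ) ^ (p + 1) * ((n : ℝ) ^ (-p) - ((n : ℝ) + 1) ^ (-p)))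
      atTop (𝓝 p) := by
  have hlim := (tendsto_nat_mul_one_add_inv_rpow_sub_one (-p)).neg
  rw [neg_neg] at hlim
  refine hlim.congr' ?_
  filter_upwards [eventually_gt_atTop 0] with n hn
  have hn : (0 : ℝ) < n := Nat.cast_pos.2 hn
  have hsucc : (n + 1 : ℝ) ^ (-p) = (n : ℝ) ^ (-p) * (1 + (n : ℝ)⁻¹) ^ (-p) := by
    rw [← Real.mul_rpow hn.le (by positivity), mul_add, mul_inv_cancel₀ hn.ne', mul_one]
  have hpow : (n : ℝ) ^ (p + 1) * (n : ℝ) ^ (-p) = n := by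
    rw [← Real.rpow_add hn]; simp
  rw [hsucc]
  linear_combination ((1 + (n : ℝ)⁻¹) ^ (-p) - 1) * hpow

theorem stmt9 (ω : ℕ → ℝ) (k ℓ : ℝ) (hk : 1 < k)
    (h0 : Filter.Tendsto ω Filter.atTop (nhds 0))
    (h : Filter.Tendsto (fun n : ℕ => (n : ℝ) ^ k * (ω n - ω (n + 1)))
      Filter.atTop (nhds ℓ)) :
    Filter.Tendsto (fun n : ℕ => (n : ℝ) ^ (k - 1) * ω n)
      Filter.atTop (nhds (ℓ / (k - 1))) := by
  have hk1 : 0 < k - 1 := sub_pos.2 hk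
  set b : ℕ → ℝ := fun n => (n : ℝ) ^ (-(k - 1))
  have hb : Tendsto b atTop (𝓝 0) :=
    (tendsto_rpow_neg_atTop hk1).comp tendsto_natCast_atTop_atTop
  have hb_anti : ∀ᶠ n in atTop, b (n + 1) < b n := by
    filter_upwards [eventually_gt_atTop 0] with n hn
    simpa [b] using Real.rpow_lt_rpow_of_neg (Nat.cast_pos.2 hn) (lt_add_one (n : ℝ))
      (neg_lt_zero.2 hk1)
  have hdiff : Tendsto (fun n : ℕ => (n : ℝ) ^ k * (b n - b (n + 1))) atTop (𝓝 (k - 1)) := by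
    simpa [b] using tendsto_rpow_mul_rpow_neg_sub_rpow_neg (k - 1)
  have hratio : Tendsto (fun n => (ω n - ω (n + 1)) / (b n - b (n + 1))) atTop
      (𝓝 (ℓ / (k - 1))) := by
    refine (h.div hdiff hk1.ne').congr' ?_
    filter_upwards [eventually_gt_atTop 0] with n hn
    exact mul_div_mul_left _ _ (Real.rpow_pos_of_pos (Nat.cast_pos.2 hn) k).ne'
  refine (tendsto_div_of_tendsto_sub_div_sub h0 hb hb_anti hratio).congr fun n => ?_
  show ω n / (n : ℝ) ^ (-(k - 1)) = _
  rw [Real.rpow_neg (Nat.cast_nonneg n), div_inv_eq_mul, mul_comm]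
end

section
/- For all x ≥ 1, 1/(12x) − 1/(360x^3) + 1/(1260x^5) − 1/(1680x^7) − (1/12)·[1/(x+1/2) + 1/(2(x+1/2)^2) + 1/(6(x+1/2)^3) − 1/(30(x+1/2)^5) + 1/(42(x+1/2)^7)] − 1/(240x^3) + 11/(6720x^5) > 0. -/
/-! Over the common denominator `20160 x⁷ (2x+1)⁷` the numerator, written in `t = x - 1`, has
only positive coefficients, so it is positive for `x ≥ 1`. -/

def bNumerator (t : ℝ) : ℝ :=
  12547 + 93268*t + 263179*t^2 + 382830*t^3 + 315336*t^4 + 147504*t^5 + 35952*t^6 + 3424*t^7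

lemma bNumerator_pos {t : ℝ} (ht : 0 ≤ t) : 0 < bNumerator t := by
  unfold bNumerator
  positivity

lemma b_eq_bNumerator_div {x : ℝ} (hx : x ≠ 0) (hx' : 2*x + 1 ≠ 0) :
    1/(12*x) - 1/(360*x^3) + 1/(1260*x^5) - 1/(1680*x^7)
      - (1/12) * (1/(x+1/2) + 1/(2*(x+1/2)^2) + 1/(6*(x+1/2)^3) - 1/(30*(x+1/2)^5)
          + 1/(42*(x+1/2)^7))
      - 1/(240*x^3) + 11/(6720*x^5)
      = bNumerator (x - 1) / (20160 * x^7 * (2*x+1)^7) := by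
  -- `field_simp` rewrites `x + 1/2` as `(x * 2 + 1) / 2`
  have hx'' : x * 2 + 1 ≠ 0 := by rwa [mul_comm]
  unfold bNumerator
  field_simp
  ring

theorem stmt17 (x : ℝ) (hx : 1 ≤ x) :
    0 < 1/(12*x) - 1/(360*x^3) + 1/(1260*x^5) - 1/(1680*x^7)
      - (1/12) * (1/(x+1/2) + 1/(2*(x+1/2)^2) + 1/(6*(x+1/2)^3) - 1/(30*(x+1/2)^5)
          + 1/(42*(x+1/2)^7))
      - 1/(240*x^3) + 11/(6720*x^5) := by
  have hx0 : 0 < x := by linarith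
  rw [b_eq_bNumerator_div hx0.ne' (by positivity)]
  exact div_pos (bNumerator_pos (by linarith)) (by positivity)
end
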